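/- arXiv:0709.2989 — 6 statements merged into one kernel-verified Lean document; each statement's English description precedes it below -/
import Mathlib

section
/- Let Θ ⊂ ℝ^N be a bounded measurable set with positive Lebesgue measure and let U : Θ → [0,1] be measurable. Fix J ≥ 1 and δ > 0, and let π^{(J)} be the probability measure on Θ with density proportional to (U(θ)+δ)^J with respect to Lebesgue measure. Let α ∈ (0,1] and ε ∈ [0,1] and define σ = 1 / ( 1 + ((1+δ)/(ε+1+δ))^J · ( (1/α)·(1+δ)/(ε+δ) − 1 ) · (1+δ)/δ ). Then π^{(J)}{ θ ∈ Θ : θ is an approximate global optimizer of U with value imprecision ε and residual domain α } ≥ σ. -/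
/-!
Take an upper `α`-quantile `ρ` of `U` on `Θ`: a fraction at least `α` of `Θ` lies in
`{U ≥ ρ}` and at most `α` in `{U > ρ}` (it exists as soon as some point of `Θ` fails to be an
approximate optimizer). Every `θ` with `U θ ≥ ρ - ε` is then an approximate optimizer, so the
remaining points lie in `{U < ρ - ε}`, which has measure at most `(1 - α) |Θ|` and weight
`(U + δ)^J ≤ (ρ - ε + δ)^J`, whereas the optimizers contain `{U ≥ ρ}` and carry weight at
least `(ρ + δ)^J α |Θ|`. The quotient of these bounds is at most `K = oddsBound J δ α ε`, and
`π^{(J)}(optimizers) ≥ 1 / (1 + K)` follows.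
-/

open MeasureTheory Set
open scoped ENNReal

/-- Bound on the odds `π^{(J)}(non-optimizers) / π^{(J)}(optimizers)`; the confidence level
is `σ = 1 / (1 + oddsBound J δ α ε)`. -/
noncomputable def oddsBound (J δ α ε : ℝ) : ℝ :=
  ((1 + δ) / (ε + 1 + δ)) ^ J * ((1 / α) * (1 + δ) / (ε + δ) - 1) * ((1 + δ) / δ)

section OddsBound

variable {J δ α ε : ℝ}

theorem one_div_sub_one_le_div_mul_sub_one (hδ : 0 < δ) (hα : 0 < α) (hε : ε ∈ Icc 0 1) :
    1 / α - 1 ≤ (1 / α) * (1 + δ) / (ε + δ) - 1 := by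
  have h : 1 ≤ (1 + δ) / (ε + δ) := by
    rw [le_div_iff₀ (by linarith [hε.1])]; linarith [hε.2]
  rw [mul_div_assoc]
  linarith [le_mul_of_one_le_right (one_div_pos.2 hα).le h]

theorem one_sub_le_mul_div_mul (hδ : 0 < δ) (hα : α ∈ Ioc 0 1) (hε : ε ∈ Icc 0 1) :
    1 - α ≤ ((1 / α) * (1 + δ) / (ε + δ) - 1) * ((1 + δ) / δ) * α := by
  obtain ⟨hα0, hα1⟩ := hα
  have hM := one_div_sub_one_le_div_mul_sub_one hδ hα0 hε
  have hα_inv : 1 ≤ 1 / α := by rw [le_div_iff₀ hα0]; linarith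
  have hδ_frac : 1 ≤ (1 + δ) / δ := by rw [le_div_iff₀ hδ]; linarith
  calc 1 - α = (1 / α - 1) * 1 * α := by field_simp
    _ ≤ ((1 / α) * (1 + δ) / (ε + δ) - 1) * ((1 + δ) / δ) * α := by
        gcongr
        linarith

theorem oddsBound_nonneg (hδ : 0 < δ) (hα : α ∈ Ioc 0 1) (hε : ε ∈ Icc 0 1) :
    0 ≤ oddsBound J δ α ε := by
  have hM := one_div_sub_one_le_div_mul_sub_one hδ hα.1 hε
  have hα_inv : 1 ≤ 1 / α := by rw [le_div_iff₀ hα.1]; linarith [hα.2]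
  have hε1δ : 0 < ε + 1 + δ := by linarith [hε.1]
  have hfactor : 0 ≤ (1 / α) * (1 + δ) / (ε + δ) - 1 := by linarith
  unfold oddsBound
  positivity

theorem add_rpow_mul_one_sub_le_oddsBound_mul (hJ : 0 ≤ J) (hδ : 0 < δ) (hα : α ∈ Ioc 0 1)
    (hε : ε ∈ Icc 0 1) {ρ : ℝ} (hερ : ε ≤ ρ) (hρ1 : ρ ≤ 1) :
    (ρ - ε + δ) ^ J * (1 - α) ≤ oddsBound J δ α ε * ((ρ + δ) ^ J * α) := by
  have hε1δ : 0 < ε + 1 + δ := by linarith [hε.1]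
  -- the relative loss `(ρ - ε + δ) / (ρ + δ)` is largest at `ρ = 1`
  have hratio : ρ - ε + δ ≤ (ρ + δ) * ((1 + δ) / (ε + 1 + δ)) := by
    rw [mul_div_assoc', le_div_iff₀ hε1δ]
    nlinarith [mul_nonneg hε.1 (by linarith [hε.1] : 0 ≤ 1 + ε - ρ)]
  have hρδ : 0 ≤ ρ + δ := by linarith [hε.1]
  have hpow : (ρ - ε + δ) ^ J ≤ (ρ + δ) ^ J * ((1 + δ) / (ε + 1 + δ)) ^ J := by
    rw [← Real.mul_rpow hρδ (by positivity)]
    exact Real.rpow_le_rpow (by linarith) hratio hJ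
  calc (ρ - ε + δ) ^ J * (1 - α)
      ≤ (ρ + δ) ^ J * ((1 + δ) / (ε + 1 + δ)) ^ J *
          (((1 / α) * (1 + δ) / (ε + δ) - 1) * ((1 + δ) / δ) * α) :=
        mul_le_mul hpow (one_sub_le_mul_div_mul hδ hα hε) (by linarith [hα.2])
          (mul_nonneg (Real.rpow_nonneg hρδ _) (by positivity))
    _ = oddsBound J δ α ε * ((ρ + δ) ^ J * α) := by unfold oddsBound; ring

end OddsBound

theorem ofReal_one_div_one_add_le_div {a b : ℝ≥0∞} {K : ℝ} (hK : 0 ≤ K)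
    (hb : b ≤ ENNReal.ofReal K * a) (hab : a + b ≠ 0) (ha : a ≠ ∞) :
    ENNReal.ofReal (1 / (1 + K)) ≤ a / (a + b) := by
  have hsum : a + b ≤ ENNReal.ofReal (1 + K) * a := by
    rw [ENNReal.ofReal_add zero_le_one hK, ENNReal.ofReal_one, add_mul, one_mul]
    gcongr
  have hab_top : a + b ≠ ∞ :=
    ne_top_of_le_ne_top (ENNReal.mul_ne_top ENNReal.ofReal_ne_top ha) hsum
  rw [ENNReal.le_div_iff_mul_le (Or.inl hab) (Or.inl hab_top)]
  calc ENNReal.ofReal (1 / (1 + K)) * (a + b)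
      ≤ ENNReal.ofReal (1 / (1 + K)) * (ENNReal.ofReal (1 + K) * a) := by gcongr
    _ = a := by
      rw [← mul_assoc, ← ENNReal.ofReal_mul (by positivity),
        one_div_mul_cancel (by linarith), ENNReal.ofReal_one, one_mul]

section Measure

variable {X : Type*} [MeasurableSpace X] {μ : Measure X} {s : Set X} {f : X → ℝ}

theorem setLIntegral_le_mul_measure {g : X → ℝ≥0∞} {c : ℝ≥0∞} (hs : MeasurableSet s)
    (h : ∀ x ∈ s, g x ≤ c) : ∫⁻ x in s, g x ∂μ ≤ c * μ s :=
  (setLIntegral_mono' hs h).trans_eq (setLIntegral_const s c)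

theorem mul_measure_le_setLIntegral {g : X → ℝ≥0∞} {c : ℝ≥0∞} (hs : MeasurableSet s)
    (h : ∀ x ∈ s, c ≤ g x) : c * μ s ≤ ∫⁻ x in s, g x ∂μ :=
  (setLIntegral_const s c).symm.trans_le (setLIntegral_mono' hs h)

theorem exists_superlevel_quantile (hs : MeasurableSet s) (hμs : μ s ≠ ∞)
    (hf : Measurable f) {t : ℝ≥0∞} {a b : ℝ} (ha : t < μ {x ∈ s | a < f x})
    (hb : μ {x ∈ s | b < f x} ≤ t) :
    ∃ ρ ∈ Icc a b, t ≤ μ {x ∈ s | ρ ≤ f x} ∧ μ {x ∈ s | ρ < f x} ≤ t := by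
  have hanti : Antitone fun y => μ {x ∈ s | y < f x} := fun y y' hyy' =>
    measure_mono fun x hx => ⟨hx.1, hyy'.trans_lt hx.2⟩
  set S := {y | t < μ {x ∈ s | y < f x}}
  have haS : a ∈ S := ha
  have hS_le : ∀ y ∈ S, y ≤ b := fun y hy =>
    not_lt.1 fun hby => (hy.trans_le (hanti hby.le)).not_ge hb
  have hbdd : BddAbove S := ⟨b, hS_le⟩
  refine ⟨sSup S, ⟨le_csSup hbdd haS, csSup_le ⟨a, haS⟩ hS_le⟩, ?_, ?_⟩
  · obtain ⟨v, hv_mono, hv_lt, hv_tend⟩ := exists_seq_strictMono_tendsto (sSup S)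
    have hInter : {x ∈ s | sSup S ≤ f x} = ⋂ n, {x ∈ s | v n < f x} := by
      ext x
      simp only [mem_iInter]
      refine ⟨fun hx n => ⟨hx.1, (hv_lt n).trans_le hx.2⟩, fun hx => ⟨(hx 0).1, ?_⟩⟩
      exact le_of_tendsto' hv_tend fun n => (hx n).2.le
    have hE_anti : Antitone fun n => {x ∈ s | v n < f x} := fun m n hmn x hx =>
      ⟨hx.1, (hv_mono.monotone hmn).trans_lt hx.2⟩
    rw [hInter, hE_anti.measure_iInter
      (fun n => (hs.inter (hf measurableSet_Ioi)).nullMeasurableSet)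
      ⟨0, ne_top_of_le_ne_top hμs (measure_mono (sep_subset _ _))⟩]
    refine le_iInf fun n => ?_
    obtain ⟨y, hyS, hvy⟩ := exists_lt_of_lt_csSup ⟨a, haS⟩ (hv_lt n)
    exact hyS.le.trans (hanti hvy.le)
  · obtain ⟨u, hu_anti, hu_gt, hu_tend⟩ := exists_seq_strictAnti_tendsto (sSup S)
    have hUnion : {x ∈ s | sSup S < f x} = ⋃ n, {x ∈ s | u n < f x} := by
      ext x
      simp only [mem_iUnion]
      refine ⟨fun hx => ?_, fun ⟨n, hn⟩ => ⟨hn.1, (hu_gt n).trans hn.2⟩⟩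
      obtain ⟨n, hn⟩ := (hu_tend.eventually (gt_mem_nhds hx.2)).exists
      exact ⟨n, hx.1, hn⟩
    have hE_mono : Monotone fun n => {x ∈ s | u n < f x} := fun m n hmn x hx =>
      ⟨hx.1, (hu_anti.antitone hmn).trans_lt hx.2⟩
    rw [hUnion, hE_mono.measure_iUnion]
    exact iSup_le fun n => not_lt.1 fun hn => (le_csSup hbdd hn).not_gt (hu_gt n)

def approxOptimizers (μ : Measure X) (s : Set X) (f : X → ℝ) (ε α : ℝ) : Set X :=
  {x ∈ s | μ {y ∈ s | f y > f x + ε} ≤ ENNReal.ofReal α * μ s}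

variable {J δ α ε : ℝ}

theorem ofReal_add_rpow_le_ofReal_add_rpow {u v : ℝ} (hJ : 0 ≤ J) (hu : 0 ≤ u + δ)
    (huv : u ≤ v) :
    ENNReal.ofReal ((u + δ) ^ J) ≤ ENNReal.ofReal ((v + δ) ^ J) :=
  ENNReal.ofReal_le_ofReal (Real.rpow_le_rpow hu (by linarith) hJ)

theorem setLIntegral_lt_sub_le_oddsBound_mul (hs : MeasurableSet s) (hμs : μ s ≠ ∞)
    (hf : Measurable f) (hf0 : ∀ x ∈ s, 0 ≤ f x) (hJ : 0 ≤ J) (hδ : 0 < δ)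
    (hα : α ∈ Ioc 0 1) (hε : ε ∈ Icc 0 1) {ρ : ℝ} (hερ : ε ≤ ρ) (hρ1 : ρ ≤ 1)
    (hρ : ENNReal.ofReal α * μ s ≤ μ {x ∈ s | ρ ≤ f x}) :
    ∫⁻ x in {x ∈ s | f x < ρ - ε}, ENNReal.ofReal ((f x + δ) ^ J) ∂μ ≤
      ENNReal.ofReal (oddsBound J δ α ε) *
        ∫⁻ x in s \ {x ∈ s | f x < ρ - ε}, ENNReal.ofReal ((f x + δ) ^ J) ∂μ := by
  set B := {x ∈ s | f x < ρ - ε}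
  set W := {x ∈ s | ρ ≤ f x}
  have hBm : MeasurableSet B := hs.inter (hf measurableSet_Iio)
  have hWm : MeasurableSet W := hs.inter (hf measurableSet_Ici)
  have hBW : Disjoint B W := disjoint_left.2 fun x hB hW => by linarith [hB.2, hW.2, hε.1]
  have hμB : μ B ≤ ENNReal.ofReal (1 - α) * μ s := by
    have hsplit : μ s = ENNReal.ofReal (1 - α) * μ s + ENNReal.ofReal α * μ s := by
      rw [← add_mul, ← ENNReal.ofReal_add (by linarith [hα.2]) hα.1.le, sub_add_cancel,
        ENNReal.ofReal_one, one_mul]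
    refine (ENNReal.add_le_add_iff_right
      (ENNReal.mul_ne_top (ENNReal.ofReal_ne_top (r := α)) hμs)).1 ?_
    calc μ B + ENNReal.ofReal α * μ s ≤ μ B + μ W := by gcongr
      _ = μ (B ∪ W) := (measure_union hBW hWm).symm
      _ ≤ μ s := measure_mono (union_subset (sep_subset _ _) (sep_subset _ _))
      _ = _ := hsplit
  calc ∫⁻ x in B, ENNReal.ofReal ((f x + δ) ^ J) ∂μ
      ≤ ENNReal.ofReal ((ρ - ε + δ) ^ J) * μ B :=
        setLIntegral_le_mul_measure hBm fun x hx =>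
          ofReal_add_rpow_le_ofReal_add_rpow hJ (by linarith [hf0 x hx.1]) (by linarith [hx.2])
    _ ≤ ENNReal.ofReal ((ρ - ε + δ) ^ J * (1 - α)) * μ s := by
        rw [ENNReal.ofReal_mul (Real.rpow_nonneg (by linarith) _), mul_assoc]
        gcongr
    _ ≤ ENNReal.ofReal (oddsBound J δ α ε * ((ρ + δ) ^ J * α)) * μ s := by
        gcongr ?_ * _
        exact ENNReal.ofReal_le_ofReal <|
          add_rpow_mul_one_sub_le_oddsBound_mul hJ hδ hα hε hερ hρ1
    _ = ENNReal.ofReal (oddsBound J δ α ε) *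
          (ENNReal.ofReal ((ρ + δ) ^ J) * (ENNReal.ofReal α * μ s)) := by
        rw [ENNReal.ofReal_mul (oddsBound_nonneg hδ hα hε),
          ENNReal.ofReal_mul (Real.rpow_nonneg (by linarith [hε.1]) _)]
        ring
    _ ≤ ENNReal.ofReal (oddsBound J δ α ε) * (ENNReal.ofReal ((ρ + δ) ^ J) * μ W) := by
        gcongr
    _ ≤ ENNReal.ofReal (oddsBound J δ α ε) *
          ∫⁻ x in s \ B, ENNReal.ofReal ((f x + δ) ^ J) ∂μ := by
        gcongr
        calc ENNReal.ofReal ((ρ + δ) ^ J) * μ W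
            ≤ ∫⁻ x in W, ENNReal.ofReal ((f x + δ) ^ J) ∂μ :=
              mul_measure_le_setLIntegral hWm fun x hx =>
                ofReal_add_rpow_le_ofReal_add_rpow hJ (by linarith [hε.1]) hx.2
          _ ≤ _ := lintegral_mono_set fun x hx =>
              (⟨hx.1, fun hB => hBW.notMem_of_mem_left hB hx⟩ : x ∈ s \ B)

theorem exists_setLIntegral_le_oddsBound_mul (hs : MeasurableSet s) (hμs : μ s ≠ ∞)
    (hf : Measurable f) (hf01 : ∀ x ∈ s, f x ∈ Icc 0 1) (hJ : 0 ≤ J) (hδ : 0 < δ)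
    (hα : α ∈ Ioc 0 1) (hε : ε ∈ Icc 0 1) :
    ∃ B ⊆ s, MeasurableSet B ∧ s \ B ⊆ approxOptimizers μ s f ε α ∧
      ∫⁻ x in B, ENNReal.ofReal ((f x + δ) ^ J) ∂μ ≤
        ENNReal.ofReal (oddsBound J δ α ε) *
          ∫⁻ x in s \ B, ENNReal.ofReal ((f x + δ) ^ J) ∂μ := by
  by_cases hall : s ⊆ approxOptimizers μ s f ε α
  · exact ⟨∅, empty_subset _, .empty, sdiff_empty.symm ▸ hall, by simp⟩
  obtain ⟨x₀, hx₀, hx₀_not_opt⟩ := not_subset.1 hall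
  have hx₀_bad : ENNReal.ofReal α * μ s < μ {y ∈ s | f x₀ + ε < f y} :=
    not_le.1 fun h => hx₀_not_opt ⟨hx₀, h⟩
  have hnone : μ {y ∈ s | 1 < f y} ≤ ENNReal.ofReal α * μ s := by
    have hempty : {y ∈ s | 1 < f y} = ∅ :=
      eq_empty_of_forall_notMem fun y hy => (hf01 y hy.1).2.not_gt hy.2
    rw [hempty, measure_empty]
    exact zero_le
  obtain ⟨ρ, ⟨hρ₀, hρ1⟩, hρ_ge, hρ_gt⟩ := exists_superlevel_quantile hs hμs hf hx₀_bad hnone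
  refine ⟨{x ∈ s | f x < ρ - ε}, sep_subset _ _, hs.inter (hf measurableSet_Iio), ?_,
    setLIntegral_lt_sub_le_oddsBound_mul hs hμs hf (fun x hx => (hf01 x hx).1) hJ hδ hα hε
      (by linarith [(hf01 x₀ hx₀).1]) hρ1 hρ_ge⟩
  -- above level `ρ - ε`, only the points above the quantile `ρ` can beat `f x + ε`
  rintro x ⟨hx, hx_high⟩
  have hρx : ρ - ε ≤ f x := not_lt.1 fun h => hx_high ⟨hx, h⟩
  refine ⟨hx, (measure_mono fun y (hy : y ∈ {y ∈ s | f y > f x + ε}) => ?_).trans hρ_gt⟩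
  exact ⟨hy.1, by linarith [hy.2]⟩

theorem ofReal_one_div_one_add_oddsBound_le (hs : MeasurableSet s) (hμs₀ : μ s ≠ 0)
    (hμs : μ s ≠ ∞) (hf : Measurable f) (hf01 : ∀ x ∈ s, f x ∈ Icc 0 1) (hJ : 0 ≤ J)
    (hδ : 0 < δ) (hα : α ∈ Ioc 0 1) (hε : ε ∈ Icc 0 1) :
    ENNReal.ofReal (1 / (1 + oddsBound J δ α ε)) ≤
      (∫⁻ x in approxOptimizers μ s f ε α, ENNReal.ofReal ((f x + δ) ^ J) ∂μ) /
        ∫⁻ x in s, ENNReal.ofReal ((f x + δ) ^ J) ∂μ := by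
  obtain ⟨B, hBs, hBm, hgood, hB⟩ :=
    exists_setLIntegral_le_oddsBound_mul hs hμs hf hf01 hJ hδ hα hε
  have hsplit : ∫⁻ x in s, ENNReal.ofReal ((f x + δ) ^ J) ∂μ =
      (∫⁻ x in s \ B, ENNReal.ofReal ((f x + δ) ^ J) ∂μ) +
        ∫⁻ x in B, ENNReal.ofReal ((f x + δ) ^ J) ∂μ := by
    rw [← lintegral_union hBm disjoint_sdiff_left, sdiff_union_of_subset hBs]
  have hpos : ∫⁻ x in s, ENNReal.ofReal ((f x + δ) ^ J) ∂μ ≠ 0 := by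
    refine (lt_of_lt_of_le ?_ (mul_measure_le_setLIntegral hs fun x hx =>
      ofReal_add_rpow_le_ofReal_add_rpow hJ (by linarith) (hf01 x hx).1)).ne'
    exact ENNReal.mul_pos (ENNReal.ofReal_pos.2 (Real.rpow_pos_of_pos (by linarith) _)).ne'
      hμs₀
  have hfin : ∫⁻ x in s \ B, ENNReal.ofReal ((f x + δ) ^ J) ∂μ ≠ ∞ := by
    refine ne_top_of_le_ne_top (ENNReal.mul_ne_top ENNReal.ofReal_ne_top hμs)
      ((lintegral_mono_set sdiff_subset).trans (setLIntegral_le_mul_measure hs fun x hx =>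
        ofReal_add_rpow_le_ofReal_add_rpow hJ (by linarith [(hf01 x hx).1]) (hf01 x hx).2))
  calc ENNReal.ofReal (1 / (1 + oddsBound J δ α ε))
      ≤ (∫⁻ x in s \ B, ENNReal.ofReal ((f x + δ) ^ J) ∂μ) /
          ∫⁻ x in s, ENNReal.ofReal ((f x + δ) ^ J) ∂μ := by
        rw [hsplit]
        exact ofReal_one_div_one_add_le_div (oddsBound_nonneg hδ hα hε) hB (hsplit ▸ hpos) hfin
    _ ≤ _ := ENNReal.div_le_div_right (lintegral_mono_set hgood) _

end Measure

/-- **Theorem 1 of the paper.** If `θ` is sampled from the distribution `π^{(J)}` on `Θ`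
with density proportional to `(U θ + δ)^J` w.r.t. Lebesgue measure, then with probability
at least `σ` it is an approximate global optimizer of `U` with value imprecision `ε`
and residual domain `α`. Here `π^{(J)}(A) = ∫_A (U+δ)^J dθ / ∫_Θ (U+δ)^J dθ`. -/
theorem simulated_annealing_confidence {N : ℕ} (Θ : Set (Fin N → ℝ))
    (hΘm : MeasurableSet Θ) (hΘb : Bornology.IsBounded Θ) (hΘpos : 0 < volume Θ)
    (U : (Fin N → ℝ) → ℝ) (hUmeas : Measurable U)
    (hU : ∀ θ ∈ Θ, U θ ∈ Set.Icc (0 : ℝ) 1)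
    (J δ : ℝ) (hJ : 1 ≤ J) (hδ : 0 < δ)
    (α ε : ℝ) (hα : α ∈ Set.Ioc (0 : ℝ) 1) (hε : ε ∈ Set.Icc (0 : ℝ) 1)
    (σ : ℝ)
    (hσ : σ = 1 / (1 + ((1 + δ) / (ε + 1 + δ)) ^ J *
      ((1 / α) * (1 + δ) / (ε + δ) - 1) * ((1 + δ) / δ))) :
    ENNReal.ofReal σ ≤
      (∫⁻ θ in {θ ∈ Θ | volume {θ' ∈ Θ | U θ' > U θ + ε} ≤ ENNReal.ofReal α * volume Θ},
          ENNReal.ofReal ((U θ + δ) ^ J)) /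
      (∫⁻ θ in Θ, ENNReal.ofReal ((U θ + δ) ^ J)) := by
  subst hσ
  exact ofReal_one_div_one_add_oddsBound_le hΘm hΘpos.ne' hΘb.measure_lt_top.ne hUmeas hU
    (by linarith) hδ hα hε
end

section
/- Let Θ ⊂ ℝ^N be a bounded measurable set with positive Lebesgue measure and let U : Θ → [0,1] be measurable. If ε > 0 and α ∈ (0,1], then the set of approximate global optimizers of U with value imprecision ε and residual domain α, i.e. { θ ∈ Θ : π_Leb{θ' ∈ Θ : U(θ') > U(θ) + ε} ≤ α · π_Leb(Θ) }, has strictly positive Lebesgue measure. -/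
/-!
Cut the range of `U` into slabs of width `ε` and let `k` be the first level whose strict
superlevel set `{U > kε}` is already small (at most `α · |Θ|`); it exists because `U ≤ 1`.
Every point of the slab just below, `{U > (k - 1)ε}`, lies within `ε` of level `k`, so it is an
approximate optimizer. That slab is all of `Θ` when `k = 0`, and otherwise it is large by
minimality of `k`; in both cases it has positive measure.
-/

open MeasureTheory Set

open scoped ENNReal

namespace MeasureTheory

variable {X : Type*} {s : Set X} {f : X → ℝ}

lemma setOf_gt_add_subset_of_le {x : X} {ε t : ℝ} (ht : t ≤ f x + ε) :
    {y ∈ s | f y > f x + ε} ⊆ {y ∈ s | t < f y} :=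
  fun _ ⟨hy, hlt⟩ => ⟨hy, ht.trans_lt hlt⟩

lemma exists_nat_setOf_add_mul_lt_eq_empty {a b ε : ℝ} (hb : ∀ x ∈ s, f x ≤ b) (hε : 0 < ε) :
    ∃ k : ℕ, {x ∈ s | a + k * ε < f x} = ∅ := by
  obtain ⟨k, hk⟩ := exists_nat_gt ((b - a) / ε)
  refine ⟨k, eq_empty_of_forall_notMem fun x ⟨hx, hlt⟩ => ?_⟩
  have : b - a < k * ε := (div_lt_iff₀ hε).1 hk
  linarith [hb x hx]

variable [MeasurableSpace X] (μ : Measure X)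

theorem measure_setOf_measure_setOf_gt_add_le_pos {a b ε : ℝ} (ha : ∀ x ∈ s, a ≤ f x)
    (hb : ∀ x ∈ s, f x ≤ b) (hε : 0 < ε) (hs : 0 < μ s) (c : ℝ≥0∞) :
    0 < μ {x ∈ s | μ {y ∈ s | f y > f x + ε} ≤ c} := by
  have hex : ∃ k : ℕ, μ {x ∈ s | a + k * ε < f x} ≤ c :=
    (exists_nat_setOf_add_mul_lt_eq_empty (a := a) hb hε).imp fun k hk => by simp [hk]
  set k := Nat.find hex
  let slab : Set X := {x ∈ s | a + (k - 1 : ℝ) * ε < f x}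
  have slab_subset : slab ⊆ {x ∈ s | μ {y ∈ s | f y > f x + ε} ≤ c} := fun x ⟨hx, hlt⟩ =>
    ⟨hx, (measure_mono (setOf_gt_add_subset_of_le (by linarith))).trans (Nat.find_spec hex)⟩
  refine (pos_iff_ne_zero.2 fun h0 => ?_).trans_le (measure_mono slab_subset)
  rcases hk : k with _ | m
  · have : s ⊆ slab := fun x hx => ⟨hx, by rw [hk, Nat.cast_zero]; linarith [ha x hx]⟩
    exact hs.ne' (measure_mono_null this h0)
  · have hm : ¬ μ {x ∈ s | a + m * ε < f x} ≤ c := Nat.find_min hex (by omega)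
    have : slab = {x ∈ s | a + m * ε < f x} := by simp [slab, hk]
    exact hm (this ▸ h0 ▸ zero_le)

end MeasureTheory

theorem approx_optimizers_pos_measure_general {N : ℕ} (Θ : Set (Fin N → ℝ))
    (hΘpos : 0 < volume Θ)
    (U : (Fin N → ℝ) → ℝ)
    (hU : ∀ θ ∈ Θ, U θ ∈ Set.Icc (0 : ℝ) 1)
    (ε α : ℝ) (hε : 0 < ε) :
    0 < volume {θ ∈ Θ | volume {θ' ∈ Θ | U θ' > U θ + ε} ≤ ENNReal.ofReal α * volume Θ} :=
  measure_setOf_measure_setOf_gt_add_le_pos volume (fun θ hθ => (hU θ hθ).1)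
    (fun θ hθ => (hU θ hθ).2) hε hΘpos _

/-- For any measurable optimization criterion `U : Θ → [0,1]` on a bounded measurable set
`Θ ⊂ ℝ^N` of positive Lebesgue measure, if `ε > 0` and `α ∈ (0,1]`, the set of approximate
global optimizers of `U` with value imprecision `ε` and residual domain `α` has strictly
positive Lebesgue measure. -/
theorem approx_optimizers_pos_measure {N : ℕ} (Θ : Set (Fin N → ℝ))
    (hΘm : MeasurableSet Θ) (hΘb : Bornology.IsBounded Θ) (hΘpos : 0 < volume Θ)
    (U : (Fin N → ℝ) → ℝ) (hUmeas : Measurable U)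
    (hU : ∀ θ ∈ Θ, U θ ∈ Set.Icc (0 : ℝ) 1)
    (ε α : ℝ) (hε : 0 < ε) (hα : α ∈ Set.Ioc (0 : ℝ) 1) :
    0 < volume {θ ∈ Θ | volume {θ' ∈ Θ | U θ' > U θ + ε} ≤ ENNReal.ofReal α * volume Θ} :=
  approx_optimizers_pos_measure_general Θ hΘpos U hU ε α hε
end

section
/- Let Θ ⊂ ℝ^N be a bounded measurable set with positive Lebesgue measure, let U : Θ → [0,1] be measurable, let δ > 0, U_δ = U + δ, and let π_δ be the probability measure on Θ with density proportional to U_δ with respect to Lebesgue measure. Let ᾱ ∈ (0,1], ρ ∈ (0,1], and define y_ᾱ = inf{ y : π_δ{θ ∈ Θ : U_δ(θ) ≤ y} ≥ 1 − ᾱ }. Then { θ ∈ Θ : π_δ{θ' ∈ Θ : ρ·U_δ(θ') > U_δ(θ)} ≤ ᾱ } = { θ ∈ Θ : U_δ(θ) ≥ ρ·y_ᾱ }. -/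
open MeasureTheory ProbabilityTheory Set Filter

/-! The event `ρ (U θ' + δ) > U θ + δ` is `U θ' + δ > (U θ + δ) / ρ`, so the left-hand set consists of
the `θ` for which `(U θ + δ) / ρ` lies above the `(1 - ᾱ)`-quantile `y` of `U + δ` under `π_δ`. The only
analytic input is that, by right continuity of distribution functions, the infimum defining a quantile
is attained; for `ᾱ = 1` the infimum runs over all of `ℝ` and is the junk value `sInf univ = 0`. -/

theorem StieltjesFunction.csInf_le_iff_le {R : Type*} [ConditionallyCompleteLinearOrder R]
    [TopologicalSpace R] [OrderTopology R] (F : StieltjesFunction R) {c : ℝ}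
    (hbdd : BddBelow {z | c ≤ F z}) (hne : {z | c ≤ F z}.Nonempty) {s : R} :
    sInf {z | c ≤ F z} ≤ s ↔ c ≤ F s := by
  have hglb := isGLB_csInf hne hbdd
  have hattained : c ≤ F (sInf {z | c ≤ F z}) := by
    have hcont : ContinuousWithinAt F {z | c ≤ F z} (sInf {z | c ≤ F z}) :=
      (F.right_continuous _).mono fun _ hz => hglb.1 hz
    exact closure_minimal (image_subset_iff.2 fun _ hz => hz) isClosed_Ici
      (hcont.mem_closure_image (hglb.mem_closure hne))
  exact ⟨fun h => hattained.trans (F.mono h), fun h => csInf_le hbdd h⟩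

theorem ProbabilityTheory.csInf_le_iff_le_cdf (μ : Measure ℝ) {c : ℝ} (hc0 : 0 < c) (hc1 : c < 1)
    {s : ℝ} : sInf {z | c ≤ cdf μ z} ≤ s ↔ c ≤ cdf μ s := by
  refine (cdf μ).csInf_le_iff_le ?_ ?_
  · obtain ⟨b, hb⟩ := eventually_atBot.1 ((tendsto_cdf_atBot μ).eventually (gt_mem_nhds hc0))
    exact ⟨b, fun z hz => le_of_not_ge fun hzb => (hb z hzb).not_ge hz⟩
  · obtain ⟨z, hz⟩ := ((tendsto_cdf_atTop μ).eventually (lt_mem_nhds hc1)).exists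
    exact ⟨z, hz.le⟩

theorem ProbabilityTheory.ofReal_cdf_map {X : Type*} [MeasurableSpace X] (P : Measure X)
    [IsProbabilityMeasure P] {g : X → ℝ} (hg : Measurable g) (z : ℝ) :
    ENNReal.ofReal (cdf (P.map g) z) = P {x | g x ≤ z} := by
  have := Measure.isProbabilityMeasure_map (μ := P) hg.aemeasurable
  rw [ofReal_cdf, Measure.map_apply hg measurableSet_Iic]
  rfl

theorem ProbabilityTheory.prob_lt_le_iff_csInf_le {X : Type*} [MeasurableSpace X] (P : Measure X)
    [IsProbabilityMeasure P] {g : X → ℝ} (hg : Measurable g) {α : ℝ} (hα0 : 0 < α) (hα1 : α < 1)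
    (s : ℝ) :
    P {x | s < g x} ≤ ENNReal.ofReal α ↔
      sInf {z | ENNReal.ofReal (1 - α) ≤ P {x | g x ≤ z}} ≤ s := by
  have hquantile : {z | ENNReal.ofReal (1 - α) ≤ P {x | g x ≤ z}} =
      {z | 1 - α ≤ cdf (P.map g) z} := by
    ext z
    rw [mem_ofPred_eq, mem_ofPred_eq, ← ofReal_cdf_map P hg,
      ENNReal.ofReal_le_ofReal_iff (cdf_nonneg _ _)]
  have htail : P {x | s < g x} = ENNReal.ofReal (1 - cdf (P.map g) s) := by
    have hcompl : {x | s < g x} = {x | g x ≤ s}ᶜ := by ext; simp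
    rw [hcompl, prob_compl_eq_one_sub (s := {x | g x ≤ s}) (hg measurableSet_Iic), ← ofReal_cdf_map P hg,
      ENNReal.ofReal_sub _ (cdf_nonneg _ _), ENNReal.ofReal_one]
  rw [htail, hquantile, ENNReal.ofReal_le_ofReal_iff hα0.le,
    csInf_le_iff_le_cdf _ (by linarith) (by linarith)]
  constructor <;> intro h <;> linarith

theorem ProbabilityTheory.cond_withDensity_apply {X : Type*} [MeasurableSpace X] (μ : Measure X)
    [SFinite μ] {Θ : Set X} (hΘ : MeasurableSet Θ) (f : X → ENNReal) (A : Set X) :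
    (μ.withDensity f)[|Θ] A = (∫⁻ x in A ∩ Θ, f x ∂μ) / ∫⁻ x in Θ, f x ∂μ := by
  rw [cond_apply hΘ, withDensity_apply' _, withDensity_apply' _, inter_comm, ENNReal.div_eq_inv_mul]

theorem ProbabilityTheory.isProbabilityMeasure_cond_withDensity_ofReal {X : Type*}
    [MeasurableSpace X] (μ : Measure X) {Θ : Set X} (hΘ : MeasurableSet Θ) (hμΘ0 : μ Θ ≠ 0)
    (hμΘ : μ Θ ≠ ⊤) {h : X → ℝ} {a b : ℝ} (ha : 0 < a) (hh : ∀ x ∈ Θ, h x ∈ Icc a b) :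
    IsProbabilityMeasure ((μ.withDensity fun x => ENNReal.ofReal (h x))[|Θ]) := by
  have hlower : ENNReal.ofReal a * μ Θ ≤ ∫⁻ x in Θ, ENNReal.ofReal (h x) ∂μ := by
    rw [← setLIntegral_const]
    exact setLIntegral_mono' hΘ fun x hx => ENNReal.ofReal_le_ofReal (hh x hx).1
  have hupper : ∫⁻ x in Θ, ENNReal.ofReal (h x) ∂μ ≤ ENNReal.ofReal b * μ Θ := by
    rw [← setLIntegral_const]
    exact setLIntegral_mono' hΘ fun x hx => ENNReal.ofReal_le_ofReal (hh x hx).2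
  refine cond_isProbabilityMeasure_of_finite ?_ ?_ <;> rw [withDensity_apply _ hΘ]
  · exact (lt_of_lt_of_le (ENNReal.mul_pos (ENNReal.ofReal_pos.2 ha).ne' hμΘ0) hlower).ne'
  · exact ne_top_of_le_ne_top (ENNReal.mul_ne_top ENNReal.ofReal_ne_top hμΘ) hupper

/-- First step in the proof of the paper's Theorem 1: with
`π_δ(A) = ∫_A (U+δ) dθ / ∫_Θ (U+δ) dθ` and
`y_ᾱ = inf { y : π_δ{θ ∈ Θ : U(θ)+δ ≤ y} ≥ 1-ᾱ }`, the set
`{θ ∈ Θ : π_δ{θ' ∈ Θ : ρ(U(θ')+δ) > U(θ)+δ} ≤ ᾱ}` coincides with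
`{θ ∈ Θ : U(θ)+δ ≥ ρ y_ᾱ}`. -/
theorem quantile_set_eq {N : ℕ} (Θ : Set (Fin N → ℝ))
    (hΘm : MeasurableSet Θ) (hΘb : Bornology.IsBounded Θ) (hΘpos : 0 < volume Θ)
    (U : (Fin N → ℝ) → ℝ) (hUmeas : Measurable U)
    (hU : ∀ θ ∈ Θ, U θ ∈ Set.Icc (0 : ℝ) 1)
    (δ : ℝ) (hδ : 0 < δ)
    (πδ : Set (Fin N → ℝ) → ENNReal)
    (hπδ : ∀ A : Set (Fin N → ℝ),
      πδ A = (∫⁻ θ in A ∩ Θ, ENNReal.ofReal (U θ + δ)) /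
             (∫⁻ θ in Θ, ENNReal.ofReal (U θ + δ)))
    (ᾱ ρ : ℝ) (hᾱ : ᾱ ∈ Set.Ioc (0 : ℝ) 1) (hρ : ρ ∈ Set.Ioc (0 : ℝ) 1)
    (y : ℝ)
    (hy : y = sInf {z : ℝ | ENNReal.ofReal (1 - ᾱ) ≤ πδ {θ ∈ Θ | U θ + δ ≤ z}}) :
    {θ ∈ Θ | πδ {θ' ∈ Θ | ρ * (U θ' + δ) > U θ + δ} ≤ ENNReal.ofReal ᾱ} =
      {θ ∈ Θ | ρ * y ≤ U θ + δ} := by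
  set P := (volume.withDensity fun θ => ENNReal.ofReal (U θ + δ))[|Θ]
  have hπ : πδ = P := funext fun A => by rw [hπδ, cond_withDensity_apply _ hΘm]
  subst hπ
  have : IsProbabilityMeasure P :=
    isProbabilityMeasure_cond_withDensity_ofReal (a := δ) (b := 1 + δ) _ hΘm hΘpos.ne'
      hΘb.measure_lt_top.ne hδ fun θ hθ => ⟨by linarith [(hU θ hθ).1], by linarith [(hU θ hθ).2]⟩
  have hsep : ∀ p : (Fin N → ℝ) → Prop, P {θ ∈ Θ | p θ} = P {θ | p θ} :=
    fun _ => cond_inter_self hΘm _ _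
  ext θ
  refine and_congr_right fun hθ => ?_
  rcases hᾱ.2.lt_or_eq with hᾱ1 | rfl
  · simp only [hsep, gt_iff_lt, ← div_lt_iff₀' hρ.1] at hy ⊢
    rw [prob_lt_le_iff_csInf_le P (hUmeas.add_const δ) hᾱ.1 hᾱ1, ← hy, le_div_iff₀' hρ.1]
  · have hy0 : y = 0 := by simp [hy]
    rw [hy0, mul_zero, ENNReal.ofReal_one]
    exact iff_of_true prob_le_one (by linarith [(hU θ hθ).1])
end

section
/- Let Θ ⊂ ℝ^N be a bounded measurable set with positive Lebesgue measure, let U : Θ → [0,1] be measurable, let δ > 0, U_δ = U + δ, let J ≥ 1, and let π^{(J)} be the probability measure on Θ with density proportional to U_δ^J with respect to Lebesgue measure; let π_δ = π^{(1)}. Let ᾱ ∈ (0,1], ρ ∈ (0,1], and y_ᾱ = inf{ y : π_δ{θ ∈ Θ : U_δ(θ) ≤ y} ≥ 1 − ᾱ }. Then π^{(J)}{ θ ∈ Θ : U_δ(θ) ≥ ρ·y_ᾱ } ≥ 1 / ( 1 + ρ^J · ((1 − ᾱ)/ᾱ) · ((1+δ)/δ) ). -/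
/-!
Write `f = U + δ`, so that `δ ≤ f ≤ 1 + δ` on `Θ`, and `π_δ`, `π^{(J)}` are Lebesgue measure with
densities `f`, `f ^ J` conditioned on `Θ`. By continuity from below the quantile `y` satisfies
`π_δ{f < y} ≤ 1 - ᾱ`, so the `π_δ`-odds of `{f < y}` against `{f ≥ y}` are at most `(1 - ᾱ) / ᾱ`.
Passing from the density `f` to `f ^ J` multiplies mass by at most `(ρ y) ^ J / δ` on `{f < ρ y}`
and by at least `y ^ (J - 1)` on `{f ≥ ρ y} ⊇ {f ≥ y}`. As `y ≤ 1 + δ`, the `π^{(J)}`-odds of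
`{f < ρ y}` against `{f ≥ ρ y}` are at most `K = ρ ^ J ((1 - ᾱ) / ᾱ) ((1 + δ) / δ)`, and odds at
most `K` mean probability at least `1 / (1 + K)`.
-/

open MeasureTheory Set ProbabilityTheory
open scoped ENNReal

section Quantile

variable {α : Type*} [MeasurableSpace α] {ν : Measure α} {g : α → ℝ} {c : ℝ≥0∞}

theorem measure_lt_le_of_forall_measure_le {y : ℝ} (h : ∀ z < y, ν {x | g x ≤ z} ≤ c) :
    ν {x | g x < y} ≤ c := by
  obtain ⟨u, hu_mono, hu_lt, hu_lim⟩ := exists_seq_strictMono_tendsto y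
  have hunion : {x | g x < y} = ⋃ n, {x | g x ≤ u n} := by
    ext x
    simpa using (Set.ext_iff.1 (iUnion_Iic_eq_Iio_of_lt_of_tendsto hu_lt hu_lim) (g x)).symm
  rw [hunion, Monotone.measure_iUnion fun m n hmn x hx => hx.trans (hu_mono.monotone hmn)]
  exact iSup_le fun n => h _ (hu_lt n)

theorem measure_lt_sInf_le (hbdd : BddBelow {z | c ≤ ν {x | g x ≤ z}}) :
    ν {x | g x < sInf {z | c ≤ ν {x | g x ≤ z}}} ≤ c :=
  measure_lt_le_of_forall_measure_le fun _ hz => (not_le.1 fun hc => (csInf_le hbdd hc).not_gt hz).le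

theorem csInf_le_of_ae_le [IsProbabilityMeasure ν] (hg : Measurable g) (hc : c ≤ 1) {M : ℝ}
    (hbdd : BddBelow {z | c ≤ ν {x | g x ≤ z}}) (hM : ∀ᵐ x ∂ν, g x ≤ M) :
    sInf {z | c ≤ ν {x | g x ≤ z}} ≤ M := by
  refine csInf_le hbdd ?_
  rwa [mem_ofPred_eq, (prob_compl_eq_zero_iff (measurableSet_le hg measurable_const)).1 hM]

end Quantile

section Odds

variable {α : Type*} [MeasurableSpace α] {P : Measure α} [IsProbabilityMeasure P] {s : Set α}

theorem prob_compl_le_ofReal_div_mul {a : ℝ} (hs : MeasurableSet s) (ha : a ∈ Ioc 0 1)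
    (h : P sᶜ ≤ ENNReal.ofReal (1 - a)) : P sᶜ ≤ ENNReal.ofReal ((1 - a) / a) * P s := by
  have hPs : ENNReal.ofReal a ≤ P s := by
    have hsum : ENNReal.ofReal a + ENNReal.ofReal (1 - a) = P s + P sᶜ := by
      rw [prob_add_prob_compl hs, ← ENNReal.ofReal_add ha.1.le (by linarith [ha.2]),
        add_sub_cancel, ENNReal.ofReal_one]
    exact (ENNReal.add_le_add_iff_right (measure_ne_top P sᶜ)).1
      (hsum ▸ add_le_add_right h _)
  calc P sᶜ ≤ ENNReal.ofReal (1 - a) := h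
    _ = ENNReal.ofReal ((1 - a) / a) * ENNReal.ofReal a := by
      rw [← ENNReal.ofReal_mul' ha.1.le, div_mul_cancel₀ _ ha.1.ne']
    _ ≤ ENNReal.ofReal ((1 - a) / a) * P s := by gcongr

theorem ofReal_one_div_one_add_le_prob {K : ℝ} (hs : MeasurableSet s) (hK : 0 ≤ K)
    (h : P sᶜ ≤ ENNReal.ofReal K * P s) : ENNReal.ofReal (1 / (1 + K)) ≤ P s := by
  have h1 : 1 ≤ ENNReal.ofReal (1 + K) * P s :=
    calc 1 = P s + P sᶜ := (prob_add_prob_compl hs).symm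
      _ ≤ P s + ENNReal.ofReal K * P s := by gcongr
      _ = ENNReal.ofReal (1 + K) * P s := by
        rw [ENNReal.ofReal_add zero_le_one hK, ENNReal.ofReal_one, add_mul, one_mul]
  rwa [one_div, ENNReal.ofReal_inv_of_pos (by linarith), ENNReal.inv_le_iff_le_mul]
  all_goals simp

end Odds

theorem Real.rpow_sub_one_mul_le_rpow {y v J : ℝ} (hy : 0 ≤ y) (hyv : y ≤ v) (hJ : 1 ≤ J) :
    y ^ (J - 1) * v ≤ v ^ J := by
  have hv : 0 ≤ v := hy.trans hyv
  calc y ^ (J - 1) * v ≤ v ^ (J - 1) * v := by gcongr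
    _ = v ^ J := by rw [← Real.rpow_add_one' hv (by linarith), sub_add_cancel]

theorem Real.mul_rpow_le_rpow_mul {δ v t J : ℝ} (hδ : 0 ≤ δ) (hδv : δ ≤ v) (hvt : v ≤ t)
    (hJ : 0 ≤ J) : δ * v ^ J ≤ t ^ J * v := by
  have hv : 0 ≤ v := hδ.trans hδv
  rw [mul_comm _ v]
  exact mul_le_mul hδv (Real.rpow_le_rpow hv hvt hJ) (Real.rpow_nonneg hv J) hv

section WeightedIntegrals

variable {α : Type*} [MeasurableSpace α] {μ : Measure α} {s : Set α} {f : α → ℝ}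

theorem ofReal_rpow_sub_one_mul_setLIntegral_le (hs : MeasurableSet s) (hf : Measurable f)
    {J y t : ℝ} (hJ : 1 ≤ J) (hy : 0 ≤ y) (hty : t ≤ y) :
    ENNReal.ofReal (y ^ (J - 1)) * ∫⁻ x in s ∩ {x | y ≤ f x}, ENNReal.ofReal (f x) ∂μ ≤
      ∫⁻ x in s ∩ {x | t ≤ f x}, ENNReal.ofReal (f x ^ J) ∂μ :=
  calc _ = ∫⁻ x in s ∩ {x | y ≤ f x}, ENNReal.ofReal (y ^ (J - 1)) * ENNReal.ofReal (f x) ∂μ :=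
        (lintegral_const_mul' _ _ ENNReal.ofReal_ne_top).symm
    _ ≤ ∫⁻ x in s ∩ {x | y ≤ f x}, ENNReal.ofReal (f x ^ J) ∂μ :=
        setLIntegral_mono' (hs.inter (measurableSet_le measurable_const hf)) fun x hx => by
          rw [← ENNReal.ofReal_mul (Real.rpow_nonneg hy _)]
          exact ENNReal.ofReal_le_ofReal (Real.rpow_sub_one_mul_le_rpow hy hx.2 hJ)
    _ ≤ _ := lintegral_mono_set (inter_subset_inter_right s fun _ hx => hty.trans hx)

theorem ofReal_mul_setLIntegral_rpow_le (hs : MeasurableSet s) (hf : Measurable f)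
    {δ J t y : ℝ} (hδ : 0 ≤ δ) (hfδ : ∀ x ∈ s, δ ≤ f x) (hJ : 0 ≤ J) (hty : t ≤ y) :
    ENNReal.ofReal δ * ∫⁻ x in s ∩ {x | f x < t}, ENNReal.ofReal (f x ^ J) ∂μ ≤
      ENNReal.ofReal (t ^ J) * ∫⁻ x in s ∩ {x | f x < y}, ENNReal.ofReal (f x) ∂μ :=
  calc _ = ∫⁻ x in s ∩ {x | f x < t}, ENNReal.ofReal δ * ENNReal.ofReal (f x ^ J) ∂μ :=
        (lintegral_const_mul' _ _ ENNReal.ofReal_ne_top).symm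
    _ ≤ ∫⁻ x in s ∩ {x | f x < t}, ENNReal.ofReal (t ^ J) * ENNReal.ofReal (f x) ∂μ :=
        setLIntegral_mono' (hs.inter (measurableSet_lt hf measurable_const)) fun x hx => by
          have hδt : 0 ≤ t := hδ.trans ((hfδ x hx.1).trans hx.2.le)
          rw [← ENNReal.ofReal_mul hδ, ← ENNReal.ofReal_mul (Real.rpow_nonneg hδt J)]
          exact ENNReal.ofReal_le_ofReal (Real.mul_rpow_le_rpow_mul hδ (hfδ x hx.1) hx.2.le hJ)
    _ = ENNReal.ofReal (t ^ J) * ∫⁻ x in s ∩ {x | f x < t}, ENNReal.ofReal (f x) ∂μ :=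
        lintegral_const_mul' _ _ ENNReal.ofReal_ne_top
    _ ≤ _ := mul_le_mul_right
        (lintegral_mono_set (inter_subset_inter_right s fun _ hx => lt_of_lt_of_le hx hty)) _

theorem setLIntegral_rpow_lt_le_mul (hs : MeasurableSet s) (hf : Measurable f)
    {δ J ρ y M c : ℝ} (hδ : 0 < δ) (hfδ : ∀ x ∈ s, δ ≤ f x) (hJ : 1 ≤ J) (hρ₀ : 0 ≤ ρ)
    (hρ₁ : ρ ≤ 1) (hy : 0 ≤ y) (hyM : y ≤ M) (hc : 0 ≤ c)
    (hodds : ∫⁻ x in s ∩ {x | f x < y}, ENNReal.ofReal (f x) ∂μ ≤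
      ENNReal.ofReal c * ∫⁻ x in s ∩ {x | y ≤ f x}, ENNReal.ofReal (f x) ∂μ) :
    ∫⁻ x in s ∩ {x | f x < ρ * y}, ENNReal.ofReal (f x ^ J) ∂μ ≤
      ENNReal.ofReal (ρ ^ J * c * (M / δ)) *
        ∫⁻ x in s ∩ {x | ρ * y ≤ f x}, ENNReal.ofReal (f x ^ J) ∂μ := by
  have hρy : ρ * y ≤ y := mul_le_of_le_one_left hy hρ₁
  have hpow : (ρ * y) ^ J * c = ρ ^ J * c * y * y ^ (J - 1) := by
    have hyJ : y ^ J = y ^ (J - 1) * y := by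
      rw [← Real.rpow_add_one' hy (by linarith), sub_add_cancel]
    rw [Real.mul_rpow hρ₀ hy, hyJ]
    ring
  rw [← ENNReal.mul_le_mul_iff_right (ENNReal.ofReal_pos.2 hδ).ne' ENNReal.ofReal_ne_top]
  calc ENNReal.ofReal δ * ∫⁻ x in s ∩ {x | f x < ρ * y}, ENNReal.ofReal (f x ^ J) ∂μ
      ≤ ENNReal.ofReal ((ρ * y) ^ J) * ∫⁻ x in s ∩ {x | f x < y}, ENNReal.ofReal (f x) ∂μ :=
        ofReal_mul_setLIntegral_rpow_le hs hf hδ.le hfδ (by linarith) hρy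
    _ ≤ ENNReal.ofReal ((ρ * y) ^ J) *
          (ENNReal.ofReal c * ∫⁻ x in s ∩ {x | y ≤ f x}, ENNReal.ofReal (f x) ∂μ) := by
        gcongr
    _ = ENNReal.ofReal (ρ ^ J * c * y) *
          (ENNReal.ofReal (y ^ (J - 1)) * ∫⁻ x in s ∩ {x | y ≤ f x}, ENNReal.ofReal (f x) ∂μ) := by
        rw [← mul_assoc, ← mul_assoc, ← ENNReal.ofReal_mul (Real.rpow_nonneg (by positivity) J),
          ← ENNReal.ofReal_mul (by positivity), hpow]
    _ ≤ ENNReal.ofReal (ρ ^ J * c * M) *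
          ∫⁻ x in s ∩ {x | ρ * y ≤ f x}, ENNReal.ofReal (f x ^ J) ∂μ := by
        gcongr
        exact ofReal_rpow_sub_one_mul_setLIntegral_le hs hf hJ hy hρy
    _ = _ := by
        rw [← mul_assoc, ← ENNReal.ofReal_mul hδ.le]
        congr 2
        field_simp

end WeightedIntegrals

section CondWithDensity

variable {α : Type*} [MeasurableSpace α] {μ : Measure α} {s : Set α}

theorem cond_withDensity_apply_eq_div [SFinite μ] (hs : MeasurableSet s) (w : α → ℝ≥0∞)
    (t : Set α) :
    (μ.withDensity w)[t | s] = (∫⁻ x in t ∩ s, w x ∂μ) / ∫⁻ x in s, w x ∂μ := by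
  rw [cond_apply hs, withDensity_apply', withDensity_apply', inter_comm, ENNReal.div_eq_inv_mul]

theorem isProbabilityMeasure_cond_withDensity_ofReal (hs : MeasurableSet s) (hμs₀ : μ s ≠ 0)
    (hμs : μ s ≠ ∞) {g : α → ℝ} {a b : ℝ} (ha : 0 < a) (hg : ∀ x ∈ s, g x ∈ Icc a b) :
    IsProbabilityMeasure ((μ.withDensity fun x => ENNReal.ofReal (g x))[|s]) := by
  refine cond_isProbabilityMeasure_of_finite ?_ ?_ <;> rw [withDensity_apply _ hs]
  · refine (lt_of_lt_of_le (ENNReal.mul_pos (ENNReal.ofReal_pos.2 ha).ne' hμs₀) ?_).ne'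
    rw [← setLIntegral_const]
    exact setLIntegral_mono' hs fun x hx => ENNReal.ofReal_le_ofReal (hg x hx).1
  · exact (setLIntegral_lt_top_of_le_nnreal hμs
      ⟨b.toNNReal, fun x hx => ENNReal.ofReal_le_ofReal (hg x hx).2⟩).ne

theorem cond_le_mul_cond_iff {ν : Measure α} [IsProbabilityMeasure ν[|s]] (hs : MeasurableSet s)
    {t t' : Set α} {c : ℝ≥0∞} :
    ν[t | s] ≤ c * ν[t' | s] ↔ ν (s ∩ t) ≤ c * ν (s ∩ t') := by
  have hν := not_or.1 (cond_eq_zero.not.1 (IsProbabilityMeasure.ne_zero ν[|s]))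
  rw [cond_apply hs, cond_apply hs, mul_left_comm,
    ENNReal.mul_le_mul_iff_right (ENNReal.inv_ne_zero.2 hν.1) (ENNReal.inv_ne_top.2 hν.2)]

end CondWithDensity

theorem ofReal_one_div_le_cond_withDensity_rpow {α : Type*} [MeasurableSpace α] {μ : Measure α}
    {s : Set α} {f : α → ℝ} (hs : MeasurableSet s) (hμs₀ : μ s ≠ 0) (hμs : μ s ≠ ∞)
    (hf : Measurable f) {δ M J ᾱ ρ y : ℝ} (hδ : 0 < δ) (hfδ : ∀ x ∈ s, f x ∈ Icc δ M)
    (hJ : 1 ≤ J) (hᾱ : ᾱ ∈ Ioc 0 1) (hρ₀ : 0 ≤ ρ) (hρ₁ : ρ ≤ 1)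
    (hy : y = sInf {z | ENNReal.ofReal (1 - ᾱ) ≤
      (μ.withDensity fun x => ENNReal.ofReal (f x))[{x | f x ≤ z} | s]}) :
    ENNReal.ofReal (1 / (1 + ρ ^ J * ((1 - ᾱ) / ᾱ) * (M / δ))) ≤
      (μ.withDensity fun x => ENNReal.ofReal (f x ^ J))[{x | ρ * y ≤ f x} | s] := by
  have : IsProbabilityMeasure (μ.withDensity fun x => ENNReal.ofReal (f x))[|s] :=
    isProbabilityMeasure_cond_withDensity_ofReal hs hμs₀ hμs hδ hfδ
  have : IsProbabilityMeasure (μ.withDensity fun x => ENNReal.ofReal (f x ^ J))[|s] :=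
    isProbabilityMeasure_cond_withDensity_ofReal hs hμs₀ hμs (Real.rpow_pos_of_pos hδ J)
      fun x hx => ⟨Real.rpow_le_rpow hδ.le (hfδ x hx).1 (by linarith),
        Real.rpow_le_rpow (hδ.le.trans (hfδ x hx).1) (hfδ x hx).2 (by linarith)⟩
  have hodds₀ : 0 ≤ (1 - ᾱ) / ᾱ := div_nonneg (by linarith [hᾱ.2]) hᾱ.1.le
  have hM : 0 ≤ M := by
    obtain ⟨x, hx⟩ := nonempty_of_measure_ne_zero hμs₀
    linarith [(hfδ x hx).1, (hfδ x hx).2]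
  have hK : 0 ≤ ρ ^ J * ((1 - ᾱ) / ᾱ) * (M / δ) := by
    have := Real.rpow_nonneg hρ₀ J
    positivity
  refine ofReal_one_div_one_add_le_prob (measurableSet_le measurable_const hf) hK ?_
  rcases le_or_gt (ρ * y) δ with hsmall | hlarge
  · rw [compl_ofPred, ae_iff.1 (ae_cond_of_forall_mem hs fun x hx => hsmall.trans (hfδ x hx).1)]
    exact zero_le
  have hy₀ : 0 < y := pos_of_mul_pos_right (hδ.trans hlarge) hρ₀
  have hbdd : BddBelow {z | ENNReal.ofReal (1 - ᾱ) ≤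
      (μ.withDensity fun x => ENNReal.ofReal (f x))[{x | f x ≤ z} | s]} := by
    by_contra h
    rw [Real.sInf_of_not_bddBelow h] at hy
    exact hy₀.ne' hy
  have hyM : y ≤ M := hy ▸ csInf_le_of_ae_le hf (ENNReal.ofReal_le_one.2 (by linarith [hᾱ.1]))
    hbdd (ae_cond_of_forall_mem hs fun x hx => (hfδ x hx).2)
  have hodds := prob_compl_le_ofReal_div_mul (s := {x | y ≤ f x})
    (measurableSet_le measurable_const hf) hᾱ
    (by simpa only [compl_ofPred, not_le, ← hy] using measure_lt_sInf_le hbdd)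
  rw [cond_le_mul_cond_iff hs] at hodds ⊢
  simp only [compl_ofPred, not_le] at hodds ⊢
  rw [withDensity_apply _ (hs.inter (measurableSet_lt hf measurable_const)),
    withDensity_apply _ (hs.inter (measurableSet_le measurable_const hf))] at hodds ⊢
  exact setLIntegral_rpow_lt_le_mul hs hf hδ (fun x hx => (hfδ x hx).1) hJ hρ₀ hρ₁ hy₀.le
    hyM hodds₀ hodds

/-- Lower bound on the `π^{(J)}`-probability of the superlevel set `{U+δ ≥ ρ y_ᾱ}`:
`π^{(J)}{θ ∈ Θ : U(θ)+δ ≥ ρ y_ᾱ} ≥ 1/(1 + ρ^J ((1-ᾱ)/ᾱ)((1+δ)/δ))`, where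
`π^{(J)}(A) = ∫_A (U+δ)^J dθ / ∫_Θ (U+δ)^J dθ`, `π_δ = π^{(1)}` and
`y_ᾱ = inf { y : π_δ{θ ∈ Θ : U(θ)+δ ≤ y} ≥ 1-ᾱ }`. -/
theorem superlevel_prob_lower_bound {N : ℕ} (Θ : Set (Fin N → ℝ))
    (hΘm : MeasurableSet Θ) (hΘb : Bornology.IsBounded Θ) (hΘpos : 0 < volume Θ)
    (U : (Fin N → ℝ) → ℝ) (hUmeas : Measurable U)
    (hU : ∀ θ ∈ Θ, U θ ∈ Set.Icc (0 : ℝ) 1)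
    (δ J : ℝ) (hδ : 0 < δ) (hJ : 1 ≤ J)
    (πJ : Set (Fin N → ℝ) → ENNReal)
    (hπJ : ∀ A : Set (Fin N → ℝ),
      πJ A = (∫⁻ θ in A ∩ Θ, ENNReal.ofReal ((U θ + δ) ^ J)) /
             (∫⁻ θ in Θ, ENNReal.ofReal ((U θ + δ) ^ J)))
    (πδ : Set (Fin N → ℝ) → ENNReal)
    (hπδ : ∀ A : Set (Fin N → ℝ),
      πδ A = (∫⁻ θ in A ∩ Θ, ENNReal.ofReal (U θ + δ)) /
             (∫⁻ θ in Θ, ENNReal.ofReal (U θ + δ)))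
    (ᾱ ρ : ℝ) (hᾱ : ᾱ ∈ Set.Ioc (0 : ℝ) 1) (hρ : ρ ∈ Set.Ioc (0 : ℝ) 1)
    (y : ℝ)
    (hy : y = sInf {z : ℝ | ENNReal.ofReal (1 - ᾱ) ≤ πδ {θ ∈ Θ | U θ + δ ≤ z}}) :
    ENNReal.ofReal (1 / (1 + ρ ^ J * ((1 - ᾱ) / ᾱ) * ((1 + δ) / δ))) ≤
      πJ {θ ∈ Θ | ρ * y ≤ U θ + δ} := by
  obtain rfl : πδ = (volume.withDensity fun θ => ENNReal.ofReal (U θ + δ))[|Θ] :=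
    funext fun A => by rw [hπδ, cond_withDensity_apply_eq_div hΘm]
  obtain rfl : πJ = (volume.withDensity fun θ => ENNReal.ofReal ((U θ + δ) ^ J))[|Θ] :=
    funext fun A => by rw [hπJ, cond_withDensity_apply_eq_div hΘm]
  simp_rw [← inter_ofPred_eq_sep, cond_inter_self hΘm] at hy ⊢
  exact ofReal_one_div_le_cond_withDensity_rpow hΘm hΘpos.ne' (hΘb.measure_lt_top).ne
    (hUmeas.add_const δ) hδ (fun θ hθ => ⟨le_add_of_nonneg_left (hU θ hθ).1,
      add_le_add_left (hU θ hθ).2 δ⟩) hJ hᾱ hρ.1.le hρ.2 hy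
end

section
/- Let Θ ⊂ ℝ^N be a bounded measurable set with positive Lebesgue measure, let U : Θ → [0,1] be measurable, let δ > 0, and let π_δ be the probability measure on Θ with density proportional to U + δ with respect to Lebesgue measure. Let ᾱ ∈ (0,1], ε̃ ≥ 0, and set α̃ = ((1+δ)/(ε̃+δ))·ᾱ. Then for any θ ∈ Θ, if π_δ{θ' ∈ Θ : U(θ') > U(θ) + ε̃} ≤ ᾱ, then π_Leb{θ' ∈ Θ : U(θ') > U(θ) + ε̃} ≤ α̃ · π_Leb(Θ). -/
/-!
On the superlevel set `A = {θ' ∈ Θ | U θ' > U θ + ε̃}` the weight `U + δ` is at least `ε̃ + δ`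
(because `U θ ≥ 0`), while on `Θ` it is at most `1 + δ`. Hence
`(ε̃ + δ) vol A ≤ ∫_A (U + δ) ≤ ᾱ ∫_Θ (U + δ) ≤ ᾱ (1 + δ) vol Θ`.
-/

open MeasureTheory Set
open scoped ENNReal

theorem ENNReal.le_mul_of_div_le {a b c : ℝ≥0∞} (hab : a ≤ b) (hb : b ≠ ∞) (h : a / b ≤ c) :
    a ≤ c * b := by
  rcases eq_or_ne b 0 with rfl | hb0
  · simpa using hab
  · exact (ENNReal.div_le_iff hb0 hb).1 h

section WeightedMeasure

variable {α : Type*} [MeasurableSpace α] {μ : Measure α} {s t : Set α} {w : α → ℝ≥0∞}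
  {a b r : ℝ≥0∞}

theorem const_mul_measure_le_setLIntegral (hw : Measurable w) (h : ∀ x ∈ s, a ≤ w x) :
    a * μ s ≤ ∫⁻ x in s, w x ∂μ :=
  (setLIntegral_const s a).symm.trans_le (setLIntegral_mono hw h)

theorem setLIntegral_le_const_mul (h : ∀ x ∈ s, w x ≤ b) :
    ∫⁻ x in s, w x ∂μ ≤ b * μ s :=
  (setLIntegral_mono measurable_const h).trans_eq (setLIntegral_const s b)

theorem const_mul_measure_le_of_setLIntegral_div_le (hw : Measurable w) (hts : t ⊆ s)
    (hμs : μ s ≠ ∞) (hb : b ≠ ∞) (hwt : ∀ x ∈ t, a ≤ w x) (hws : ∀ x ∈ s, w x ≤ b)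
    (hr : (∫⁻ x in t, w x ∂μ) / (∫⁻ x in s, w x ∂μ) ≤ r) :
    a * μ t ≤ r * (b * μ s) := by
  have hI : ∫⁻ x in s, w x ∂μ ≤ b * μ s := setLIntegral_le_const_mul hws
  calc a * μ t ≤ ∫⁻ x in t, w x ∂μ := const_mul_measure_le_setLIntegral hw hwt
    _ ≤ r * ∫⁻ x in s, w x ∂μ :=
      ENNReal.le_mul_of_div_le (lintegral_mono_set hts)
        (ne_top_of_le_ne_top (ENNReal.mul_ne_top hb hμs) hI) hr
    _ ≤ r * (b * μ s) := by gcongr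

end WeightedMeasure

theorem pidelta_to_lebesgue_bound_general {N : ℕ} (Θ : Set (Fin N → ℝ))
    (hΘb : Bornology.IsBounded Θ)
    (U : (Fin N → ℝ) → ℝ) (hUmeas : Measurable U)
    (hU : ∀ θ ∈ Θ, U θ ∈ Set.Icc (0 : ℝ) 1)
    (δ : ℝ) (hδ : 0 < δ)
    (πδ : Set (Fin N → ℝ) → ENNReal)
    (hπδ : ∀ A : Set (Fin N → ℝ),
      πδ A = (∫⁻ θ in A ∩ Θ, ENNReal.ofReal (U θ + δ)) /
             (∫⁻ θ in Θ, ENNReal.ofReal (U θ + δ)))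
    (ᾱ ε' α' : ℝ) (hε' : 0 ≤ ε')
    (hα' : α' = ((1 + δ) / (ε' + δ)) * ᾱ) :
    ∀ θ ∈ Θ, πδ {θ' ∈ Θ | U θ' > U θ + ε'} ≤ ENNReal.ofReal ᾱ →
      volume {θ' ∈ Θ | U θ' > U θ + ε'} ≤ ENNReal.ofReal α' * volume Θ := by
  intro θ hθ hπ
  set A := {θ' ∈ Θ | U θ' > U θ + ε'}
  have hεδ : 0 < ε' + δ := by positivity
  have key : ENNReal.ofReal (ε' + δ) * volume A ≤
      ENNReal.ofReal ᾱ * (ENNReal.ofReal (1 + δ) * volume Θ) :=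
    const_mul_measure_le_of_setLIntegral_div_le (w := fun x ↦ ENNReal.ofReal (U x + δ))
      (by fun_prop) (sep_subset Θ _) hΘb.measure_lt_top.ne ENNReal.ofReal_ne_top
      (fun x hx ↦ ENNReal.ofReal_le_ofReal (by linarith [hx.2, (hU θ hθ).1]))
      (fun x hx ↦ ENNReal.ofReal_le_ofReal (by linarith [(hU x hx).2]))
      (by rwa [hπδ, inter_eq_left.2 (sep_subset Θ _)] at hπ)
  rw [mul_comm, ← ENNReal.le_div_iff_mul_le (.inl (ENNReal.ofReal_pos.2 hεδ).ne')
    (.inl ENNReal.ofReal_ne_top)] at key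
  refine key.trans_eq ?_
  rw [hα', ENNReal.ofReal_mul (by positivity), ENNReal.ofReal_div_of_pos hεδ,
    ENNReal.div_eq_inv_mul, ENNReal.div_eq_inv_mul]
  ring

/-- From a `π_δ`-bound to a Lebesgue-measure bound: if
`π_δ{θ' ∈ Θ : U(θ') > U(θ) + ε̃} ≤ ᾱ`, where `π_δ(A) = ∫_A (U+δ) dθ / ∫_Θ (U+δ) dθ`,
then `π_Leb{θ' ∈ Θ : U(θ') > U(θ) + ε̃} ≤ α̃ π_Leb(Θ)` with
`α̃ = ((1+δ)/(ε̃+δ)) ᾱ`. -/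
theorem pidelta_to_lebesgue_bound {N : ℕ} (Θ : Set (Fin N → ℝ))
    (hΘm : MeasurableSet Θ) (hΘb : Bornology.IsBounded Θ) (hΘpos : 0 < volume Θ)
    (U : (Fin N → ℝ) → ℝ) (hUmeas : Measurable U)
    (hU : ∀ θ ∈ Θ, U θ ∈ Set.Icc (0 : ℝ) 1)
    (δ : ℝ) (hδ : 0 < δ)
    (πδ : Set (Fin N → ℝ) → ENNReal)
    (hπδ : ∀ A : Set (Fin N → ℝ),
      πδ A = (∫⁻ θ in A ∩ Θ, ENNReal.ofReal (U θ + δ)) /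
             (∫⁻ θ in Θ, ENNReal.ofReal (U θ + δ)))
    (ᾱ ε' α' : ℝ) (hᾱ : ᾱ ∈ Set.Ioc (0 : ℝ) 1) (hε' : 0 ≤ ε')
    (hα' : α' = ((1 + δ) / (ε' + δ)) * ᾱ) :
    ∀ θ ∈ Θ, πδ {θ' ∈ Θ | U θ' > U θ + ε'} ≤ ENNReal.ofReal ᾱ →
      volume {θ' ∈ Θ | U θ' > U θ + ε'} ≤ ENNReal.ofReal α' * volume Θ :=
  pidelta_to_lebesgue_bound_general Θ hΘb U hUmeas hU δ hδ πδ hπδ ᾱ ε' α' hε' hα'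
end

section
/- Let Θ ⊂ ℝ^N be a bounded measurable set with positive Lebesgue measure, let U : Θ → [0,1] be measurable, let δ > 0, U_δ = U + δ, and let π_δ be the probability measure on Θ with density proportional to U_δ with respect to Lebesgue measure. Let ᾱ ∈ (0,1], ρ ∈ (0,1], and define ε̃ = (ρ^{−1} − 1)(1+δ) and α̃ = ((1+δ)/(ε̃+δ))·ᾱ. Then { θ ∈ Θ : π_δ{θ' ∈ Θ : ρ·U_δ(θ') > U_δ(θ)} ≤ ᾱ } ⊆ { θ ∈ Θ : π_Leb{θ' ∈ Θ : U(θ') > U(θ) + ε̃} ≤ α̃ · π_Leb(Θ) }; that is, every θ in the first set is an approximate global optimizer of U with value imprecision ε̃ and residual domain α̃. -/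
open MeasureTheory Set

/-! A point `θ'` with `U θ' > U θ + ε̃` satisfies `ρ U_δ(θ') > U_δ(θ)`, since
`ρ ε̃ = (1 - ρ)(1 + δ)`. On that set `U_δ ≥ ε̃ + δ`, while `U_δ ≤ 1 + δ` on `Θ`, so a
Markov-type estimate turns the `π_δ`-mass bound `ᾱ` into the Lebesgue bound
`(1 + δ)/(ε̃ + δ) · ᾱ · π_Leb(Θ)`. -/

theorem lt_mul_add_of_add_inv_sub_one_mul_lt {u u' ρ δ : ℝ} (hρ0 : 0 < ρ) (hρ1 : ρ ≤ 1)
    (hu : u ≤ 1) (h : u + (ρ⁻¹ - 1) * (1 + δ) < u') : u + δ < ρ * (u' + δ) := by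
  have hρε : ρ * ((ρ⁻¹ - 1) * (1 + δ)) = (1 - ρ) * (1 + δ) := by field_simp
  nlinarith

section SetLIntegral

variable {α : Type*} [MeasurableSpace α] {μ : Measure α} {s t : Set α} {f : α → ℝ}

theorem ofReal_mul_measure_le_setLIntegral {c : ℝ} (hs : MeasurableSet s)
    (hf : ∀ x ∈ s, c ≤ f x) :
    ENNReal.ofReal c * μ s ≤ ∫⁻ x in s, ENNReal.ofReal (f x) ∂μ := by
  rw [← setLIntegral_const]
  exact setLIntegral_mono' hs fun x hx => ENNReal.ofReal_le_ofReal (hf x hx)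

theorem setLIntegral_le_ofReal_mul_measure {M : ℝ} (ht : MeasurableSet t)
    (hf : ∀ x ∈ t, f x ≤ M) :
    ∫⁻ x in t, ENNReal.ofReal (f x) ∂μ ≤ ENNReal.ofReal M * μ t := by
  rw [← setLIntegral_const]
  exact setLIntegral_mono' ht fun x hx => ENNReal.ofReal_le_ofReal (hf x hx)

theorem measure_le_of_setLIntegral_le_mul {a c M : ℝ} (hs : MeasurableSet s)
    (ht : MeasurableSet t) (hc : 0 < c) (ha : 0 ≤ a) (hfs : ∀ x ∈ s, c ≤ f x)
    (hft : ∀ x ∈ t, f x ≤ M)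
    (hst : ∫⁻ x in s, ENNReal.ofReal (f x) ∂μ ≤
      ENNReal.ofReal a * ∫⁻ x in t, ENNReal.ofReal (f x) ∂μ) :
    μ s ≤ ENNReal.ofReal (M / c * a) * μ t := by
  have hmarkov :
      ENNReal.ofReal c * μ s ≤ ENNReal.ofReal c * (ENNReal.ofReal (M / c * a) * μ t) :=
    calc ENNReal.ofReal c * μ s
        ≤ ∫⁻ x in s, ENNReal.ofReal (f x) ∂μ := ofReal_mul_measure_le_setLIntegral hs hfs
      _ ≤ ENNReal.ofReal a * (ENNReal.ofReal M * μ t) :=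
          hst.trans (by gcongr; exact setLIntegral_le_ofReal_mul_measure ht hft)
      _ = ENNReal.ofReal c * (ENNReal.ofReal (M / c * a) * μ t) := by
          rw [← mul_assoc, ← mul_assoc, ← ENNReal.ofReal_mul ha, ← ENNReal.ofReal_mul hc.le]
          congr 2
          field_simp
  exact (ENNReal.mul_le_mul_iff_right (ENNReal.ofReal_pos.2 hc).ne' ENNReal.ofReal_ne_top).1
    hmarkov

end SetLIntegral

/-- Second step in the proof of the paper's Theorem 1: with `ε̃ = (ρ⁻¹ - 1)(1+δ)` and
`α̃ = ((1+δ)/(ε̃+δ)) ᾱ`, every point of the set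
`{θ ∈ Θ : π_δ{θ' ∈ Θ : ρ(U(θ')+δ) > U(θ)+δ} ≤ ᾱ}` is an approximate global optimizer
of `U` with value imprecision `ε̃` and residual domain `α̃`, where
`π_δ(A) = ∫_A (U+δ) dθ / ∫_Θ (U+δ) dθ`. -/
theorem subset_approx_optimizers {N : ℕ} (Θ : Set (Fin N → ℝ))
    (hΘm : MeasurableSet Θ) (hΘb : Bornology.IsBounded Θ) (hΘpos : 0 < volume Θ)
    (U : (Fin N → ℝ) → ℝ) (hUmeas : Measurable U)
    (hU : ∀ θ ∈ Θ, U θ ∈ Set.Icc (0 : ℝ) 1)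
    (δ : ℝ) (hδ : 0 < δ)
    (πδ : Set (Fin N → ℝ) → ENNReal)
    (hπδ : ∀ A : Set (Fin N → ℝ),
      πδ A = (∫⁻ θ in A ∩ Θ, ENNReal.ofReal (U θ + δ)) /
             (∫⁻ θ in Θ, ENNReal.ofReal (U θ + δ)))
    (ᾱ ρ ε' α' : ℝ) (hᾱ : ᾱ ∈ Set.Ioc (0 : ℝ) 1) (hρ : ρ ∈ Set.Ioc (0 : ℝ) 1)
    (hε' : ε' = (ρ⁻¹ - 1) * (1 + δ))
    (hα' : α' = ((1 + δ) / (ε' + δ)) * ᾱ) :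
    {θ ∈ Θ | πδ {θ' ∈ Θ | ρ * (U θ' + δ) > U θ + δ} ≤ ENNReal.ofReal ᾱ} ⊆
      {θ ∈ Θ | volume {θ' ∈ Θ | U θ' > U θ + ε'} ≤ ENNReal.ofReal α' * volume Θ} := by
  rintro θ ⟨hθΘ, hπ⟩
  refine ⟨hθΘ, ?_⟩
  set D := ∫⁻ θ' in Θ, ENNReal.ofReal (U θ' + δ)
  have hD0 : D ≠ 0 := by
    refine (lt_of_lt_of_le ?_ (ofReal_mul_measure_le_setLIntegral (c := δ) hΘm
      fun x hx => by linarith [(hU x hx).1])).ne'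
    exact ENNReal.mul_pos (ENNReal.ofReal_pos.2 hδ).ne' hΘpos.ne'
  have hDtop : D ≠ ⊤ := ne_top_of_le_ne_top
    (ENNReal.mul_ne_top ENNReal.ofReal_ne_top hΘb.measure_lt_top.ne)
    (setLIntegral_le_ofReal_mul_measure (M := 1 + δ) hΘm fun x hx => by linarith [(hU x hx).2])
  have hmass : ∫⁻ θ' in {θ' ∈ Θ | ρ * (U θ' + δ) > U θ + δ}, ENNReal.ofReal (U θ' + δ)
      ≤ ENNReal.ofReal ᾱ * D := by
    rwa [hπδ, inter_eq_left.2 (sep_subset _ _),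
      ENNReal.div_le_iff_le_mul (.inl hD0) (.inl hDtop)] at hπ
  have hsub : {θ' ∈ Θ | U θ' > U θ + ε'} ⊆ {θ' ∈ Θ | ρ * (U θ' + δ) > U θ + δ} :=
    fun θ' h => ⟨h.1, lt_mul_add_of_add_inv_sub_one_mul_lt hρ.1 hρ.2 (hU θ hθΘ).2 (hε' ▸ h.2)⟩
  have hε'δ : 0 < ε' + δ := by
    have : 1 ≤ ρ⁻¹ := one_le_inv_iff₀.2 hρ
    nlinarith
  rw [hα']
  exact measure_le_of_setLIntegral_le_mul (hΘm.inter (measurableSet_lt measurable_const hUmeas))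
    hΘm hε'δ hᾱ.1.le (fun x hx => by linarith [hx.2, (hU θ hθΘ).1])
    (fun x hx => by linarith [(hU x hx).2]) ((lintegral_mono_set hsub).trans hmass)
end
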